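/- arXiv:2106.10946 — 2 statements merged into one kernel-verified Lean document; each statement's English description precedes it below -/
import Mathlib

section
/- If a logic program P has a ≥-largest predicate (a predicate q such that q ≥ p for all predicates p of P) and P is strict, then the set of all predicates of P has a signing. -/
/-!
Sign every predicate `p` by the sign `i` of `q₀ ≥ᵢ p`, where `q₀` is the largest predicate;
strictness makes this sign unique. If `p ≥ᵢ q`, composing gives `q₀ ≥_{s(p)·i} q`, so
`s(q) = s(p)·i`, which is `s(p) = s(q)·i` because `i = ±1`.
-/

/-- Signed dependency relation: `SignedDep dp dn p i q` formalizes `p ≥ᵢ q`. -/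
inductive SignedDep {Pred : Type*} (dp dn : Pred → Pred → Prop) : Pred → ℤ → Pred → Prop
  | refl (p : Pred) : SignedDep dp dn p 1 p
  | pos {p q r : Pred} {j : ℤ} : dp p q → SignedDep dp dn q j r →
      SignedDep dp dn p (1 * j) r
  | neg {p q r : Pred} {j : ℤ} : dn p q → SignedDep dp dn q j r →
      SignedDep dp dn p ((-1) * j) r

namespace SignedDep

variable {Pred : Type*} {dp dn : Pred → Pred → Prop} {p q r : Pred} {i j : ℤ}

lemma eq_one_or_eq_neg_one (h : SignedDep dp dn p i q) : i = 1 ∨ i = -1 := by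
  induction h with
  | refl => left; rfl
  | pos _ _ ih => simpa using ih
  | neg _ _ ih => rcases ih with rfl | rfl <;> simp

lemma mul_self_eq_one (h : SignedDep dp dn p i q) : i * i = 1 := by
  rcases h.eq_one_or_eq_neg_one with rfl | rfl <;> rfl

lemma trans (h : SignedDep dp dn p i q) (h' : SignedDep dp dn q j r) :
    SignedDep dp dn p (i * j) r := by
  induction h with
  | refl => simpa using h'
  | pos hd _ ih => rw [mul_assoc]; exact .pos hd (ih h')
  | neg hd _ ih => rw [mul_assoc]; exact .neg hd (ih h')

lemma sign_unique (hstrict : ∀ p q : Pred, ¬ (SignedDep dp dn p 1 q ∧ SignedDep dp dn p (-1) q))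
    (hi : SignedDep dp dn p i q) (hj : SignedDep dp dn p j q) : i = j := by
  rcases hi.eq_one_or_eq_neg_one with rfl | rfl <;>
    rcases hj.eq_one_or_eq_neg_one with rfl | rfl
  · rfl
  · exact (hstrict p q ⟨hi, hj⟩).elim
  · exact (hstrict p q ⟨hj, hi⟩).elim
  · rfl

end SignedDep

theorem stmt7 {Pred : Type*} (dp dn : Pred → Pred → Prop) (q0 : Pred)
    (hlarge : ∀ p : Pred, ∃ i : ℤ, SignedDep dp dn q0 i p)
    (hstrict : ∀ p q : Pred, ¬ (SignedDep dp dn p 1 q ∧ SignedDep dp dn p (-1) q)) :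
    ∃ s : Pred → ℤ, (∀ p, s p = 1 ∨ s p = -1) ∧
      ∀ p q (i : ℤ), SignedDep dp dn p i q → s p = s q * i := by
  choose s hs using hlarge
  refine ⟨s, fun p => (hs p).eq_one_or_eq_neg_one, fun p q i h => ?_⟩
  have hq : s q = s p * i := SignedDep.sign_unique hstrict (hs q) ((hs p).trans h)
  rw [hq, mul_assoc, h.mul_self_eq_one, mul_one]
end

section
/- Let D be a propositional defeasible theory with closures P_Δ and P_λ. Define the ∂*-operator (individual defeat) on sets S of literals: q ∈ F*(S) iff q ∈ P_Δ, or there exists r ∈ R_sd with head q such that all body literals of r are in S, ~q ∉ P_Δ, and for every rule s with head ~q, either some body literal of s is not in P_λ, or r > s. Similarly define the ∂-operator (team defeat) F where the last condition 'r > s' is replaced by 'there exists t ∈ R_sd with head q, all body literals of t in S, and t > s'. Then both F* and F are monotone, and lfp(F*) ⊆ lfp(F) (i.e., every ∂*-consequence is a ∂-consequence). -/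
/-!
Both operators are monotone because a larger set of literals only makes more rule bodies
applicable. Individual defeat is the special case of team defeat in which the defeating
team is the supporting rule itself, so the ∂*-operator lies pointwise below the ∂-operator,
and taking least fixed points preserves this order.
-/

/-- A rule of a propositional defeasible theory: a finite set of body
literals and a head literal. -/
structure SRule (L : Type*) where
  head : L
  body : Finset L

namespace DefeasibleTheory

variable {L : Type*} (R Rsd : Set (SRule L)) (sup : SRule L → SRule L → Prop)
  (compl : L → L) (PD Plam : Set L)

/-- The operator `F*` of the paper. -/
def individualDefeatOp (S : Set L) : Set L :=
  {q | q ∈ PD ∨ ∃ r ∈ Rsd, r.head = q ∧ (∀ b ∈ r.body, b ∈ S) ∧ compl q ∉ PD ∧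
    ∀ s ∈ R, s.head = compl q → ((∃ b ∈ s.body, b ∉ Plam) ∨ sup r s)}

/-- The operator `F` of the paper. -/
def teamDefeatOp (S : Set L) : Set L :=
  {q | q ∈ PD ∨ ∃ r ∈ Rsd, r.head = q ∧ (∀ b ∈ r.body, b ∈ S) ∧ compl q ∉ PD ∧
    ∀ s ∈ R, s.head = compl q → ((∃ b ∈ s.body, b ∉ Plam) ∨
      ∃ t ∈ Rsd, t.head = q ∧ (∀ b ∈ t.body, b ∈ S) ∧ sup t s)}

theorem individualDefeatOp_monotone :
    Monotone (individualDefeatOp R Rsd sup compl PD Plam) := by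
  rintro S T hST q (hq | ⟨r, hr, hhead, hbody, hcompl, hattack⟩)
  · exact Or.inl hq
  · exact Or.inr ⟨r, hr, hhead, fun b hb => hST (hbody b hb), hcompl, hattack⟩

theorem teamDefeatOp_monotone : Monotone (teamDefeatOp R Rsd sup compl PD Plam) := by
  rintro S T hST q (hq | ⟨r, hr, hhead, hbody, hcompl, hattack⟩)
  · exact Or.inl hq
  refine Or.inr ⟨r, hr, hhead, fun b hb => hST (hbody b hb), hcompl, fun s hs hshead => ?_⟩
  obtain hblocked | ⟨t, ht, hthead, htbody, hts⟩ := hattack s hs hshead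
  · exact Or.inl hblocked
  · exact Or.inr ⟨t, ht, hthead, fun b hb => hST (htbody b hb), hts⟩

theorem individualDefeatOp_le_teamDefeatOp :
    individualDefeatOp R Rsd sup compl PD Plam ≤ teamDefeatOp R Rsd sup compl PD Plam := by
  rintro S q (hq | ⟨r, hr, hhead, hbody, hcompl, hattack⟩)
  · exact Or.inl hq
  refine Or.inr ⟨r, hr, hhead, hbody, hcompl, fun s hs hshead => ?_⟩
  exact (hattack s hs hshead).imp_right fun hrs => ⟨r, hr, hhead, hbody, hrs⟩

end DefeasibleTheory

theorem stmt19_general {L : Type*} (R Rsd : Set (SRule L))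
    (sup : SRule L → SRule L → Prop)
    (compl : L → L) (PD Plam : Set L) :
    Monotone (fun S : Set L =>
      {q | q ∈ PD ∨ ∃ r ∈ Rsd, r.head = q ∧ (∀ b ∈ r.body, b ∈ S) ∧ compl q ∉ PD ∧
        ∀ s ∈ R, s.head = compl q →
          ((∃ b ∈ s.body, b ∉ Plam) ∨ sup r s)}) ∧
    Monotone (fun S : Set L =>
      {q | q ∈ PD ∨ ∃ r ∈ Rsd, r.head = q ∧ (∀ b ∈ r.body, b ∈ S) ∧ compl q ∉ PD ∧
        ∀ s ∈ R, s.head = compl q →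
          ((∃ b ∈ s.body, b ∉ Plam) ∨
            ∃ t ∈ Rsd, t.head = q ∧ (∀ b ∈ t.body, b ∈ S) ∧ sup t s)}) ∧
    ∀ (hstar : Monotone (fun S : Set L =>
      {q | q ∈ PD ∨ ∃ r ∈ Rsd, r.head = q ∧ (∀ b ∈ r.body, b ∈ S) ∧ compl q ∉ PD ∧
        ∀ s ∈ R, s.head = compl q →
          ((∃ b ∈ s.body, b ∉ Plam) ∨ sup r s)}))
      (hteam : Monotone (fun S : Set L =>
      {q | q ∈ PD ∨ ∃ r ∈ Rsd, r.head = q ∧ (∀ b ∈ r.body, b ∈ S) ∧ compl q ∉ PD ∧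
        ∀ s ∈ R, s.head = compl q →
          ((∃ b ∈ s.body, b ∉ Plam) ∨
            ∃ t ∈ Rsd, t.head = q ∧ (∀ b ∈ t.body, b ∈ S) ∧ sup t s)})),
      OrderHom.lfp ⟨_, hstar⟩ ⊆ OrderHom.lfp ⟨_, hteam⟩ :=
  ⟨DefeasibleTheory.individualDefeatOp_monotone R Rsd sup compl PD Plam,
    DefeasibleTheory.teamDefeatOp_monotone R Rsd sup compl PD Plam,
    fun _ _ => OrderHom.lfp.mono <|
      DefeasibleTheory.individualDefeatOp_le_teamDefeatOp R Rsd sup compl PD Plam⟩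

theorem stmt19 {L : Type*} (R Rsd : Set (SRule L)) (hsub : Rsd ⊆ R)
    (sup : SRule L → SRule L → Prop)
    (hacyc : ∀ r : SRule L, ¬ Relation.TransGen sup r r)
    (compl : L → L) (PD Plam : Set L) :
    Monotone (fun S : Set L =>
      {q | q ∈ PD ∨ ∃ r ∈ Rsd, r.head = q ∧ (∀ b ∈ r.body, b ∈ S) ∧ compl q ∉ PD ∧
        ∀ s ∈ R, s.head = compl q →
          ((∃ b ∈ s.body, b ∉ Plam) ∨ sup r s)}) ∧
    Monotone (fun S : Set L =>
      {q | q ∈ PD ∨ ∃ r ∈ Rsd, r.head = q ∧ (∀ b ∈ r.body, b ∈ S) ∧ compl q ∉ PD ∧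
        ∀ s ∈ R, s.head = compl q →
          ((∃ b ∈ s.body, b ∉ Plam) ∨
            ∃ t ∈ Rsd, t.head = q ∧ (∀ b ∈ t.body, b ∈ S) ∧ sup t s)}) ∧
    ∀ (hstar : Monotone (fun S : Set L =>
      {q | q ∈ PD ∨ ∃ r ∈ Rsd, r.head = q ∧ (∀ b ∈ r.body, b ∈ S) ∧ compl q ∉ PD ∧
        ∀ s ∈ R, s.head = compl q →
          ((∃ b ∈ s.body, b ∉ Plam) ∨ sup r s)}))
      (hteam : Monotone (fun S : Set L =>
      {q | q ∈ PD ∨ ∃ r ∈ Rsd, r.head = q ∧ (∀ b ∈ r.body, b ∈ S) ∧ compl q ∉ PD ∧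
        ∀ s ∈ R, s.head = compl q →
          ((∃ b ∈ s.body, b ∉ Plam) ∨
            ∃ t ∈ Rsd, t.head = q ∧ (∀ b ∈ t.body, b ∈ S) ∧ sup t s)})),
      OrderHom.lfp ⟨_, hstar⟩ ⊆ OrderHom.lfp ⟨_, hteam⟩ :=
  stmt19_general R Rsd sup compl PD Plam
end
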